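/- (Commutant characterization of locality.) Let D ⊆ ℤ^n be a finite subset and T a bounded operator on H. Then T is local upon D if and only if T commutes with every bounded operator A on H for which there exists y ∈ ℤ^n with y ∉ D such that A is local upon {y}. -/

import Mathlib

open scoped ENNReal

noncomputable section

namespace QCA

abbrev Lat (n : ℕ) : Type := Fin n → ℤ

def Conf (n : ℕ) (A : Type*) (q0 : A) : Type _ :=
  {c : Lat n → A // {x : Lat n | c x ≠ q0}.Finite}

def c0 (n : ℕ) (A : Type*) (q0 : A) : Conf n A q0 :=
  ⟨fun _ => q0, by simp⟩

abbrev H (n : ℕ) (A : Type*) (q0 : A) : Type _ := lp (fun _ : Conf n A q0 => ℂ) 2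

def eVec {n : ℕ} {A : Type*} {q0 : A} (c : Conf n A q0) : H n A q0 :=
  letI : DecidableEq (Conf n A q0) := Classical.decEq _
  lp.single 2 c 1

/-- Translation of a configuration by `z`: the configuration `x ↦ c (x + z)`. -/
def shiftConf {n : ℕ} {A : Type*} {q0 : A} (z : Lat n) (c : Conf n A q0) : Conf n A q0 :=
  ⟨fun x => c.1 (x + z), by
    have h : {x : Lat n | c.1 (x + z) ≠ q0} ⊆ (fun x : Lat n => x + z) ⁻¹' {x | c.1 x ≠ q0} :=
      fun x hx => hx
    exact (c.2.preimage ((add_left_injective z).injOn)).subset h⟩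

/-- Translation by `z` as a permutation of the set of finite configurations. -/
def shiftEquiv {n : ℕ} {A : Type*} (q0 : A) (z : Lat n) : Conf n A q0 ≃ Conf n A q0 where
  toFun := shiftConf z
  invFun := shiftConf (-z)
  left_inv c := Subtype.ext (funext fun x => by
    show c.1 (x + -z + z) = c.1 x
    rw [neg_add_cancel_right])
  right_inv c := Subtype.ext (funext fun x => by
    show c.1 (x + z + -z) = c.1 x
    rw [add_neg_cancel_right])

theorem memℓp_comp_equiv {ι κ : Type*} (e : κ ≃ ι) {f : ι → ℂ} (hf : Memℓp f 2) :
    Memℓp (fun k => f (e k)) 2 := by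
  have hp : 0 < (2 : ℝ≥0∞).toReal := by norm_num
  exact memℓp_gen ((e.summable_iff
    (f := fun i => ‖f i‖ ^ (2 : ℝ≥0∞).toReal)).mpr (hf.summable hp))

/-- The unitary operator on `ℓ²` induced by a permutation of the index set. -/
def lpCongr {ι κ : Type*} (e : ι ≃ κ) :
    lp (fun _ : ι => ℂ) 2 ≃ₗᵢ[ℂ] lp (fun _ : κ => ℂ) 2 where
  toLinearEquiv :=
    { toFun := fun f => ⟨fun k => f (e.symm k), memℓp_comp_equiv e.symm (lp.memℓp f)⟩
      map_add' := fun f g => lp.ext (funext fun k => by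
        simp [lp.coeFn_add] <;> rfl)
      map_smul' := fun r f => lp.ext (funext fun k => by
        simp [lp.coeFn_smul])
      invFun := fun g => ⟨fun i => g (e i), memℓp_comp_equiv e (lp.memℓp g)⟩
      left_inv := fun f => lp.ext (funext fun i => by simp)
      right_inv := fun g => lp.ext (funext fun k => by simp) }
  norm_map' := fun f => by
    have hp : 0 < (2 : ℝ≥0∞).toReal := by norm_num
    rw [lp.norm_eq_tsum_rpow hp, lp.norm_eq_tsum_rpow hp]
    congr 1
    exact e.symm.tsum_eq (fun i => ‖f i‖ ^ (2 : ℝ≥0∞).toReal)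

/-- The translation operator `τ_z` on the Hilbert space of finite configurations. -/
def tau {n : ℕ} {A : Type*} (q0 : A) (z : Lat n) : H n A q0 ≃ₗᵢ[ℂ] H n A q0 :=
  lpCongr (shiftEquiv q0 z)

/-- A bounded operator on `H` is translation invariant if `τ_z ∘ M ∘ τ_z⁻¹ = M` for all `z`. -/
def TranslationInvariant {n : ℕ} {A : Type*} (q0 : A) (M : H n A q0 →L[ℂ] H n A q0) : Prop :=
  ∀ (z : Lat n) (v : H n A q0), tau q0 z (M ((tau q0 z).symm v)) = M v


section Local

variable {n : ℕ} {A : Type*} [Fintype A]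

/-- The configuration agreeing with `f` on `D` and with `c` outside `D`. -/
def override {q0 : A} (D : Finset (Lat n)) (f : {x // x ∈ D} → A) (c : Conf n A q0) :
    Conf n A q0 :=
  ⟨fun x => if h : x ∈ D then f ⟨x, h⟩ else c.1 x, by
    refine Set.Finite.subset (Set.Finite.union D.finite_toSet c.2) ?_
    intro x hx
    rcases Decidable.em (x ∈ D) with h | h
    · exact Set.mem_union_left _ h
    · exact Set.mem_union_right _ (by simpa [h] using hx)⟩

/-- A bounded operator on the Hilbert space of finite configurations is local upon the finite
set `D` of cells if its action on basis vectors only modifies, and only reads, the cells in `D`. -/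
def IsLocalUpon (q0 : A) (D : Finset (Lat n)) (T : H n A q0 →L[ℂ] H n A q0) : Prop :=
  ∃ a : ({x // x ∈ D} → A) → ({x // x ∈ D} → A) → ℂ, ∀ c : Conf n A q0,
    T (eVec c) = ∑ f : {x // x ∈ D} → A,
      a f (fun x => c.1 x.1) • eVec (override D f c)

/-- The neighborhood of the cell `x`: `𝒩_x = {x + k : k ∈ 𝒩}`. -/
def nbhd {n : ℕ} (𝒩 : Finset (Lat n)) (x : Lat n) : Finset (Lat n) :=
  𝒩.image (fun k => x + k)

/-- The reflected neighborhood of the cell `x`: `𝒱_x = {x - k : k ∈ 𝒩}`. -/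
def rnbhd {n : ℕ} (𝒩 : Finset (Lat n)) (x : Lat n) : Finset (Lat n) :=
  𝒩.image (fun k => x - k)

/-- A unitary `M` is causal relative to the neighborhood `𝒩` if conjugation `M† A M` maps
operators local upon a cell `x` to operators local upon `𝒩_x`. -/
def Causal (q0 : A) (𝒩 : Finset (Lat n)) (M : H n A q0 →L[ℂ] H n A q0) : Prop :=
  ∀ (x : Lat n) (B : H n A q0 →L[ℂ] H n A q0), IsLocalUpon q0 {x} B →
    IsLocalUpon q0 (nbhd 𝒩 x) (ContinuousLinearMap.adjoint M ∘L B ∘L M)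

end Local

/-- The standard basis vector of the one-cell Hilbert space `ℂ^A`. -/
def wVec (A : Type*) [Fintype A] (a : A) : EuclideanSpace ℂ A :=
  letI : DecidableEq A := Classical.decEq A
  EuclideanSpace.single a 1

/-- The configuration obtained from `c` by replacing the value at the cell `x` by `r`. -/
def updateConf {n : ℕ} {A : Type*} {q0 : A} (x : Lat n) (r : A) (c : Conf n A q0) :
    Conf n A q0 :=
  ⟨Function.update c.1 x r, by
    refine Set.Finite.subset (c.2.union (Set.finite_singleton x)) ?_
    intro y hy
    rcases eq_or_ne y x with rfl | hxy
    · exact Set.mem_union_right _ rfl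
    · exact Set.mem_union_left _ (by
        simpa [Function.update_of_ne hxy] using hy)⟩

/-- The subalgebra `𝔇_{y,x}` of `End(ℂ^A)`: endomorphisms `a` of the one-cell Hilbert space
such that the operator `ι_x(a)` local upon `{x}` implementing `a` at the cell `x` is of the form
`R† B R` for some operator `B` local upon `{x - y}`. -/
def Dset {n : ℕ} {A : Type*} [Fintype A] (q0 : A)
    (R : H n A q0 →L[ℂ] H n A q0) (y x : Lat n) :
    Set (Module.End ℂ (EuclideanSpace ℂ A)) :=
  {a | ∃ B : H n A q0 →L[ℂ] H n A q0, IsLocalUpon q0 {x - y} B ∧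
    ∀ c : Conf n A q0,
      (ContinuousLinearMap.adjoint R ∘L B ∘L R) (eVec c) =
        ∑ q : A, (inner ℂ (wVec A q) (a (wVec A (c.1 x))) : ℂ) • eVec (updateConf x q c)}



section Component

variable {n : ℕ} {𝒩 : Finset (Lat n)} {K : {z // z ∈ 𝒩} → Type*}

/-- The propagation map on configurations in component form:
`(s c) x z = (c (x + z)) z`. -/
def sConf (qz : ∀ z : {z // z ∈ 𝒩}, K z) (c : Conf n (∀ z : {z // z ∈ 𝒩}, K z) qz) :
    Conf n (∀ z : {z // z ∈ 𝒩}, K z) qz :=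
  ⟨fun x z => c.1 (x + z.1) z, by
    refine Set.Finite.subset
      (Set.finite_iUnion (fun z : {z // z ∈ 𝒩} =>
        (c.2.preimage ((add_left_injective z.1).injOn)))) ?_
    intro x hx
    obtain ⟨z, hz⟩ := Function.ne_iff.mp hx
    exact Set.mem_iUnion.2 ⟨z, fun h => hz (congrFun h z)⟩⟩

end Component

/-- The support of a finite configuration, as a `Finset`. -/
def suppF {n : ℕ} {A : Type*} {q0 : A} (c : Conf n A q0) : Finset (Lat n) :=
  c.2.toFinset

/-- The property characterizing the local isomorphism `S̃ : H → Ĥ` induced by a one-cell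
unitary `S : W → Ŵ`. -/
def StildeProp {n : ℕ} {A B : Type*} [Fintype A] [Fintype B] (q0 : A) (qh : B)
    (Slin : EuclideanSpace ℂ A ≃ₗᵢ[ℂ] EuclideanSpace ℂ B)
    (St : H n A q0 ≃ₗᵢ[ℂ] H n B qh) : Prop :=
  ∀ c : Conf n A q0,
    St (eVec c) = ∑ g : {x // x ∈ suppF c} → B,
      (∏ x : {x // x ∈ suppF c}, (inner ℂ (wVec B (g x)) (Slin (wVec A (c.1 x.1))) : ℂ)) •
        eVec (override (suppF c) g (c0 n B qh))

/-- An endomorphism of the one-cell Hilbert space `ℂ^P`, `P = Π_{z ∈ 𝒩} K z`, acting only on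
the `y`-th coordinate. -/
def ActsOnCoord {n : ℕ} {𝒩 : Finset (Lat n)} {K : {z // z ∈ 𝒩} → Type*}
    [∀ z, Fintype (K z)] (y : {z // z ∈ 𝒩})
    (Aop : Module.End ℂ (EuclideanSpace ℂ (∀ z : {z // z ∈ 𝒩}, K z))) : Prop :=
  ∃ f : K y → K y → ℂ, ∀ p p' : ∀ z : {z // z ∈ 𝒩}, K z,
    ((∀ z : {z // z ∈ 𝒩}, z ≠ y → p z = p' z) →
      (inner ℂ (wVec _ p) (Aop (wVec _ p')) : ℂ) = f (p y) (p' y)) ∧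
    (¬ (∀ z : {z // z ∈ 𝒩}, z ≠ y → p z = p' z) →
      (inner ℂ (wVec _ p) (Aop (wVec _ p')) : ℂ) = 0)

/-- A factorization of the module `W` as a tensor product `⨂_{k} V k` carrying the sets of
endomorphisms `Dsets k` onto the endomorphisms acting on the `k`-th tensor factor alone. -/
structure PiTensorFactorization (ι : Type) [Fintype ι] [DecidableEq ι]
    (W : Type*) [AddCommGroup W] [Module ℂ W]
    (Dsets : ι → Set (Module.End ℂ W)) : Type _ where
  /-- The tensor factors. -/
  V : ι → Type
  [grp : ∀ k, AddCommGroup (V k)]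
  [mod : ∀ k, Module ℂ (V k)]
  fin : ∀ k, FiniteDimensional ℂ (V k)
  /-- The linear isomorphism with the tensor product. -/
  S : W ≃ₗ[ℂ] PiTensorProduct ℂ V
  cond : ∀ y : ι,
    (fun a : Module.End ℂ W => S.conj a) '' (Dsets y) =
      Set.range (fun f : Module.End ℂ (V y) =>
        (PiTensorProduct.map
          (Function.update (fun k => (LinearMap.id : V k →ₗ[ℂ] V k)) y f) :
            Module.End ℂ (PiTensorProduct ℂ V)))

/-- The continuous linear map underlying a linear isometry equivalence. -/
def isomCLM {E F : Type*} [NormedAddCommGroup E] [NormedAddCommGroup F]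
    [NormedSpace ℂ E] [NormedSpace ℂ F] (e : E ≃ₗᵢ[ℂ] F) : E →L[ℂ] F :=
  e.toLinearIsometry.toContinuousLinearMap

/-!
Operators local upon disjoint sets commute, because on a basis configuration each one rewrites
only its own cells. Conversely, let `T` commute with the operators local upon a cell `y ∉ D`.
Commuting with the projection onto `{c | c y = r}` kills the matrix entry `⟨c'| T |c⟩` unless
`c'` agrees with `c` off `D`, and commuting with the unitaries permuting the letter at `y` makes
`⟨override D F c| T |c⟩` invariant under changing `c` at a cell off `D`. Hence this entry
depends only on `F` and on `c` restricted to `D`: it is the kernel of `T` on `D`.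
-/

section Lp

variable {ι : Type*}

def lpIndicator (s : Set ι) : lp (fun _ : ι => ℂ) 2 →L[ℂ] lp (fun _ : ι => ℂ) 2 :=
  LinearMap.mkContinuous
    { toFun := fun v => ⟨s.indicator v,
        (lp.memℓp v).mono' fun i => norm_indicator_le_norm_self v i⟩
      map_add' := fun v w => lp.ext (Set.indicator_add s v w)
      map_smul' := fun a v => lp.ext (Set.indicator_const_smul s a v) }
    1 fun v => by
      rw [one_mul]
      exact lp.norm_mono two_ne_zero fun i => norm_indicator_le_norm_self v i

theorem lpIndicator_apply (s : Set ι) (v : lp (fun _ : ι => ℂ) 2) (i : ι) :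
    lpIndicator s v i = s.indicator v i := rfl

theorem lpCongr_apply {κ : Type*} (e : ι ≃ κ) (v : lp (fun _ : ι => ℂ) 2) (k : κ) :
    lpCongr e v k = v (e.symm k) := rfl

variable [DecidableEq ι] {T : lp (fun _ : ι => ℂ) 2 →L[ℂ] lp (fun _ : ι => ℂ) 2}

theorem lpIndicator_single_of_notMem {s : Set ι} {i : ι} (hi : i ∉ s) (a : ℂ) :
    lpIndicator s (lp.single 2 i a) = 0 := by
  ext j
  rw [lpIndicator_apply, lp.coeFn_zero, Pi.zero_apply, Set.indicator_apply_eq_zero]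
  intro hj
  exact lp.single_apply_ne (E := fun _ : ι => ℂ) 2 i a (ne_of_mem_of_not_mem hj hi)

theorem lpIndicator_single_of_mem {s : Set ι} {i : ι} (hi : i ∈ s) (a : ℂ) :
    lpIndicator s (lp.single 2 i a) = lp.single 2 i a := by
  ext j
  rw [lpIndicator_apply, Set.indicator_apply_eq_self]
  intro hj
  exact lp.single_apply_ne (E := fun _ : ι => ℂ) 2 i a (ne_of_mem_of_not_mem hi hj).symm

theorem lpCongr_single {κ : Type*} [DecidableEq κ] (e : ι ≃ κ) (i : ι) (a : ℂ) :
    lpCongr e (lp.single 2 i a) = lp.single 2 (e i) a := by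
  ext k
  simp only [lpCongr_apply, lp.single_apply, Pi.single_apply, e.symm_apply_eq]

theorem apply_single_eq_zero_of_commute_lpIndicator {s : Set ι}
    (hT : lpIndicator s ∘L T = T ∘L lpIndicator s) {i j : ι} (hi : i ∉ s) (hj : j ∈ s) :
    T (lp.single 2 i 1) j = 0 := by
  have := congrArg (· j) (DFunLike.congr_fun hT (lp.single 2 i 1))
  simpa [lpIndicator_apply, Set.indicator_of_mem hj, lpIndicator_single_of_notMem hi] using this

theorem apply_single_map_eq_of_commute_lpCongr {e : ι ≃ ι}
    (hT : isomCLM (lpCongr e) ∘L T = T ∘L isomCLM (lpCongr e)) (i j : ι) :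
    T (lp.single 2 (e i) 1) (e j) = T (lp.single 2 i 1) j := by
  have := congrArg (· (e j)) (DFunLike.congr_fun hT (lp.single 2 i 1))
  simpa [isomCLM, lpCongr_apply, lpCongr_single] using this.symm

end Lp

section Configurations

variable {n : ℕ} {Q : Type*} {q0 : Q}

theorem eVec_eq_single [DecidableEq (Conf n Q q0)] (c : Conf n Q q0) :
    eVec c = lp.single 2 c 1 := by
  unfold eVec
  congr
  exact Subsingleton.elim _ _

open Classical in
theorem eVec_apply (c c' : Conf n Q q0) : eVec c c' = if c' = c then 1 else 0 := by
  rw [eVec_eq_single, lp.single_apply, Pi.single_apply]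

theorem ext_eVec {L R : H n Q q0 →L[ℂ] H n Q q0} (h : ∀ c, L (eVec c) = R (eVec c)) :
    L = R := by
  classical
  refine lp.ext_continuousLinearMap ENNReal.ofNat_ne_top fun c => ?_
  refine ContinuousLinearMap.ext_ring ?_
  simpa [eVec_eq_single] using h c

theorem override_apply_mem {D : Finset (Lat n)} (f : D → Q) (c : Conf n Q q0) {x : Lat n}
    (hx : x ∈ D) : (override D f c).1 x = f ⟨x, hx⟩ :=
  dif_pos hx

theorem override_apply_of_notMem {D : Finset (Lat n)} (f : D → Q) (c : Conf n Q q0)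
    {x : Lat n} (hx : x ∉ D) : (override D f c).1 x = c.1 x :=
  dif_neg hx

theorem restrict_override (D : Finset (Lat n)) (f : D → Q) (c : Conf n Q q0) :
    (fun x : D => (override D f c).1 x) = f :=
  funext fun x => override_apply_mem f c x.2

theorem restrict_override_of_disjoint {D E : Finset (Lat n)} (hDE : Disjoint D E) (f : E → Q)
    (c : Conf n Q q0) : (fun x : D => (override E f c).1 x) = fun x : D => c.1 x :=
  funext fun x => override_apply_of_notMem f c (Finset.disjoint_left.mp hDE x.2)

theorem override_comm_of_disjoint {D E : Finset (Lat n)} (hDE : Disjoint D E) (f : D → Q)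
    (g : E → Q) (c : Conf n Q q0) :
    override E g (override D f c) = override D f (override E g c) := by
  refine Subtype.ext (funext fun x => ?_)
  by_cases hxE : x ∈ E
  · have hxD : x ∉ D := Finset.disjoint_right.mp hDE hxE
    rw [override_apply_mem g _ hxE, override_apply_of_notMem f _ hxD,
      override_apply_mem g _ hxE]
  · rw [override_apply_of_notMem g _ hxE]
    by_cases hxD : x ∈ D
    · rw [override_apply_mem f _ hxD, override_apply_mem f _ hxD]
    · rw [override_apply_of_notMem f _ hxD, override_apply_of_notMem f _ hxD,
        override_apply_of_notMem g _ hxE]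

theorem eq_override_iff {D : Finset (Lat n)} {f : D → Q} {c c' : Conf n Q q0} :
    c' = override D f c ↔ (fun x : D => c'.1 x) = f ∧ ∀ x ∉ D, c'.1 x = c.1 x := by
  constructor
  · rintro rfl
    exact ⟨restrict_override D f c, fun x hx => override_apply_of_notMem f c hx⟩
  · rintro ⟨rfl, hout⟩
    refine Subtype.ext (funext fun x => ?_)
    by_cases hx : x ∈ D
    · rw [override_apply_mem _ _ hx]
    · rw [override_apply_of_notMem _ _ hx, hout x hx]

theorem updateConf_apply (y : Lat n) (r : Q) (c : Conf n Q q0) (x : Lat n) :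
    (updateConf y r c).1 x = Function.update c.1 y r x := rfl

theorem updateConf_of_eq {y : Lat n} {r : Q} {c : Conf n Q q0} (h : c.1 y = r) :
    updateConf y r c = c :=
  Subtype.ext (h ▸ Function.update_eq_self y c.1)

theorem updateConf_updateConf (y : Lat n) (r s : Q) (c : Conf n Q q0) :
    updateConf y r (updateConf y s c) = updateConf y r c :=
  Subtype.ext (Function.update_idem s r c.1 :)

theorem override_singleton (y : Lat n) (f : ({y} : Finset (Lat n)) → Q) (c : Conf n Q q0) :
    override {y} f c = updateConf y (f ⟨y, Finset.mem_singleton_self y⟩) c := by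
  refine Subtype.ext (funext fun x => ?_)
  by_cases hxy : x = y
  · subst hxy
    rw [override_apply_mem f _ (Finset.mem_singleton_self x), updateConf_apply,
      Function.update_self]
  · rw [override_apply_of_notMem f _ (by simpa using hxy), updateConf_apply,
      Function.update_of_ne hxy]

theorem updateConf_override_comm {D : Finset (Lat n)} {y : Lat n} (hy : y ∉ D) (r : Q)
    (f : D → Q) (c : Conf n Q q0) :
    updateConf y r (override D f c) = override D f (updateConf y r c) := by
  rw [← override_singleton y (fun _ => r), ← override_singleton y (fun _ => r),
    override_comm_of_disjoint (Finset.disjoint_singleton_right.mpr hy)]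

def permAt (y : Lat n) (π : Equiv.Perm Q) : Equiv.Perm (Conf n Q q0) where
  toFun c := updateConf y (π (c.1 y)) c
  invFun c := updateConf y (π.symm (c.1 y)) c
  left_inv c := by
    simp only [updateConf_updateConf, updateConf_apply, Function.update_self,
      Equiv.symm_apply_apply]
    exact updateConf_of_eq rfl
  right_inv c := by
    simp only [updateConf_updateConf, updateConf_apply, Function.update_self,
      Equiv.apply_symm_apply]
    exact updateConf_of_eq rfl

theorem permAt_apply (y : Lat n) (π : Equiv.Perm Q) (c : Conf n Q q0) :
    permAt y π c = updateConf y (π (c.1 y)) c := rfl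

theorem apply_eq_apply_of_updateConf_invariant {β : Type*} {D : Finset (Lat n)}
    (φ : Conf n Q q0 → β) (hφ : ∀ y ∉ D, ∀ r c, φ (updateConf y r c) = φ c)
    {c c' : Conf n Q q0} (h : ∀ x ∈ D, c.1 x = c'.1 x) : φ c = φ c' := by
  suffices key : ∀ S : Finset (Lat n), ∀ d : Conf n Q q0,
      (∀ x ∉ S, d.1 x = c'.1 x) → (∀ x ∈ D, d.1 x = c'.1 x) → φ d = φ c' by
    refine key (suppF c ∪ suppF c') c (fun x hx => ?_) h
    simp only [suppF, Finset.mem_union, Set.Finite.mem_toFinset, Set.mem_ofPred_eq] at hx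
    push Not at hx
    rw [hx.1, hx.2]
  intro S
  induction S using Finset.induction_on with
  | empty =>
    intro d hd _
    rw [Subtype.ext (funext fun x => hd x (Finset.notMem_empty x))]
  | insert y S _ ih =>
    intro d hd hD
    have hupdate : φ (updateConf y (c'.1 y) d) = φ d := by
      by_cases hy : y ∈ D
      · rw [updateConf_of_eq (hD y hy)]
      · exact hφ y hy _ d
    have hagree : ∀ x, (x ≠ y → d.1 x = c'.1 x) →
        (updateConf y (c'.1 y) d).1 x = c'.1 x := by
      intro x hx
      rw [updateConf_apply, Function.update_apply]
      split_ifs with hxy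
      · rw [hxy]
      · exact hx hxy
    rw [← hupdate]
    refine ih _ (fun x hx => hagree x fun hxy => hd x ?_)
      (fun x hx => hagree x fun _ => hD x hx)
    simp [hxy, hx]

end Configurations

section Locality

variable {n : ℕ} {Q : Type*} [Fintype Q] {q0 : Q}

theorem IsLocalUpon.comp_eq_comp_of_disjoint {D E : Finset (Lat n)}
    {T A : H n Q q0 →L[ℂ] H n Q q0} (hT : IsLocalUpon q0 D T) (hA : IsLocalUpon q0 E A)
    (hDE : Disjoint D E) : A ∘L T = T ∘L A := by
  obtain ⟨a, ha⟩ := hT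
  obtain ⟨b, hb⟩ := hA
  refine ext_eVec fun c => ?_
  simp only [ContinuousLinearMap.comp_apply, ha, hb, map_sum, map_smul, Finset.smul_sum,
    restrict_override_of_disjoint hDE, restrict_override_of_disjoint hDE.symm,
    override_comm_of_disjoint hDE]
  rw [Finset.sum_comm]
  simp only [smul_comm (a _ _)]

theorem isLocalUpon_singleton_of_eVec {y : Lat n} {A : H n Q q0 →L[ℂ] H n Q q0}
    (b : Q → Q → ℂ)
    (hA : ∀ c, A (eVec c) = ∑ r, b r (c.1 y) • eVec (updateConf y r c)) :
    IsLocalUpon q0 {y} A := by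
  refine ⟨fun f g => b (f default) (g default), fun c => ?_⟩
  rw [hA c]
  refine Fintype.sum_equiv (Equiv.funUnique _ Q).symm _ _ fun r => ?_
  rw [override_singleton]
  rfl

theorem isLocalUpon_lpIndicator (y : Lat n) (r : Q) :
    IsLocalUpon q0 {y} (lpIndicator {c : Conf n Q q0 | c.1 y = r}) := by
  classical
  refine isLocalUpon_singleton_of_eVec (fun s t => if s = r ∧ t = r then 1 else 0) fun c => ?_
  rw [Fintype.sum_eq_single r (fun s hs => by simp [hs])]
  by_cases hc : c.1 y = r
  · simp [hc, updateConf_of_eq hc, eVec_eq_single, lpIndicator_single_of_mem]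
  · simp [hc, eVec_eq_single, lpIndicator_single_of_notMem]

theorem isLocalUpon_permAt (y : Lat n) (π : Equiv.Perm Q) :
    IsLocalUpon q0 {y} (isomCLM (lpCongr (permAt (q0 := q0) y π))) := by
  classical
  refine isLocalUpon_singleton_of_eVec (fun s t => if s = π t then 1 else 0) fun c => ?_
  simp [isomCLM, eVec_eq_single, lpCongr_single, permAt_apply]

end Locality

section Commutant

variable {n : ℕ} {Q : Type*} [Fintype Q] {q0 : Q} {T : H n Q q0 →L[ℂ] H n Q q0} {y : Lat n}

theorem apply_eVec_eq_zero_of_commute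
    (hT : ∀ A, IsLocalUpon q0 {y} A → A ∘L T = T ∘L A) {c c' : Conf n Q q0}
    (h : c'.1 y ≠ c.1 y) : T (eVec c) c' = 0 := by
  classical
  rw [eVec_eq_single]
  exact apply_single_eq_zero_of_commute_lpIndicator
    (hT _ (isLocalUpon_lpIndicator y (c'.1 y))) h.symm rfl

theorem apply_eVec_permAt (hT : ∀ A, IsLocalUpon q0 {y} A → A ∘L T = T ∘L A)
    (π : Equiv.Perm Q) (c c' : Conf n Q q0) :
    T (eVec (permAt y π c)) (permAt y π c') = T (eVec c) c' := by
  classical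
  simp only [eVec_eq_single]
  exact apply_single_map_eq_of_commute_lpCongr (hT _ (isLocalUpon_permAt y π)) c c'

theorem isLocalUpon_of_commute {D : Finset (Lat n)}
    (hT : ∀ y ∉ D, ∀ A, IsLocalUpon q0 {y} A → A ∘L T = T ∘L A) :
    IsLocalUpon q0 D T := by
  classical
  set φ : (D → Q) → Conf n Q q0 → ℂ := fun F c => T (eVec c) (override D F c)
  have hφ_invariant : ∀ F, ∀ y ∉ D, ∀ r c, φ F (updateConf y r c) = φ F c := by
    intro F y hy r c
    have := apply_eVec_permAt (hT y hy) (Equiv.swap (c.1 y) r) c (override D F c)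
    rwa [permAt_apply, permAt_apply, override_apply_of_notMem _ _ hy, Equiv.swap_apply_left,
      updateConf_override_comm hy] at this
  refine ⟨fun F g => φ F (override D g (c0 n Q q0)), fun c => lp.ext (funext fun c' => ?_)⟩
  simp only [lp.coeFn_sum, Finset.sum_apply, lp.coeFn_smul, Pi.smul_apply, eVec_apply,
    smul_eq_mul, mul_ite, mul_one, mul_zero, eq_override_iff]
  by_cases hout : ∀ x ∉ D, c'.1 x = c.1 x
  · simp only [and_iff_left hout, Finset.sum_ite_eq, Finset.mem_univ, if_true]
    have hc' : override D (fun x : D => c'.1 x) c = c' :=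
      (eq_override_iff.mpr ⟨rfl, hout⟩).symm
    calc T (eVec c) c' = φ (fun x : D => c'.1 x) c := congrArg (T (eVec c)) hc'.symm
      _ = _ := apply_eq_apply_of_updateConf_invariant _ (hφ_invariant _)
          fun x hx => by rw [override_apply_mem _ _ hx]
  · push Not at hout
    obtain ⟨y, hy, hne⟩ := hout
    rw [apply_eVec_eq_zero_of_commute (hT y hy) hne]
    exact (Finset.sum_eq_zero fun F _ => if_neg fun h => hne (h.2 y hy)).symm

end Commutant

theorem isLocalUpon_iff_commutes_with_outside_general
    (n : ℕ) (Q : Type) [Fintype Q] (q₀ : Q)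
    (D : Finset (Lat n)) (T : H n Q q₀ →L[ℂ] H n Q q₀) :
    IsLocalUpon q₀ D T ↔
      ∀ A : H n Q q₀ →L[ℂ] H n Q q₀,
        (∃ y : Lat n, y ∉ D ∧ IsLocalUpon q₀ {y} A) → A ∘L T = T ∘L A :=
  ⟨fun hT _ ⟨_, hy, hA⟩ =>
    hT.comp_eq_comp_of_disjoint hA (Finset.disjoint_singleton_right.mpr hy),
  fun h => isLocalUpon_of_commute fun y hy A hA => h A ⟨y, hy, hA⟩⟩

/-- Commutant characterization of locality. `T` is local upon `D` if and only
if it commutes with every bounded operator local upon a single cell outside of `D`. -/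
theorem isLocalUpon_iff_commutes_with_outside
    (n : ℕ) (hn : 1 ≤ n) (Q : Type) [Fintype Q] (q₀ : Q)
    (D : Finset (Lat n)) (T : H n Q q₀ →L[ℂ] H n Q q₀) :
    IsLocalUpon q₀ D T ↔
      ∀ A : H n Q q₀ →L[ℂ] H n Q q₀,
        (∃ y : Lat n, y ∉ D ∧ IsLocalUpon q₀ {y} A) → A ∘L T = T ∘L A :=
  isLocalUpon_iff_commutes_with_outside_general n Q q₀ D T

end QCA
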